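/- arXiv:2309.10555 — 2 statements merged into one kernel-verified Lean document; each statement's English description precedes it below -/
import Mathlib

section
/- Let n, r ≥ 1 and consider the polynomial function F on the complex vector space (ℂ^n)^{⊕2r} ⊕ ((ℂ^n)^∨)^{⊕r} ⊕ M_n(ℂ)^{⊕3} given by F(u_{1,1},…,u_{1,r}, u_{2,1},…,u_{2,r}, v_1,…,v_r, A, B, C) = ∑_{i=1}^r ( v_i(A u_{1,i}) − v_i(B u_{2,i}) ) + Tr( C(AB − BA) ). Then a point is a critical point of F (i.e., the ℂ-linear derivative of F at that point is zero, equivalently all directional derivatives vanish) if and only if the following equations hold: AB = BA; v_i∘A = 0 and v_i∘B = 0 for all i = 1,…,r; A u_{1,i} = B u_{2,i} for all i; ∑_{i=1}^r u_{1,i}·v_i + BC − CB = 0; and ∑_{i=1}^r u_{2,i}·v_i + AC − CA = 0, where for u ∈ ℂ^n and v ∈ (ℂ^n)^∨, u·v denotes the rank-one matrix sending w to v(w)·u. -/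
open Finset

/-- The representation space `(ℂⁿ)^{⊕2r} ⊕ ((ℂⁿ)^∨)^{⊕r} ⊕ M_n(ℂ)^{⊕3}`,
with points `(u₁, u₂, v, A, B, C)`. -/
abbrev RepSp (n r : ℕ) : Type :=
  (Fin r → (Fin n → ℂ)) × (Fin r → (Fin n → ℂ)) × (Fin r → Module.Dual ℂ (Fin n → ℂ)) ×
    Matrix (Fin n) (Fin n) ℂ × Matrix (Fin n) (Fin n) ℂ × Matrix (Fin n) (Fin n) ℂ

/-- The superpotential
`F = ∑ᵢ ( vᵢ(A u_{1,i}) − vᵢ(B u_{2,i}) ) + Tr( C(AB − BA) )`. -/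
noncomputable def Fpot (n r : ℕ) : RepSp n r → ℂ :=
  fun x =>
    (∑ i, (x.2.2.1 i (x.2.2.2.1.mulVec (x.1 i)) - x.2.2.1 i (x.2.2.2.2.1.mulVec (x.2.1 i))))
      + (x.2.2.2.2.2 * (x.2.2.2.1 * x.2.2.2.2.1 - x.2.2.2.2.1 * x.2.2.2.1)).trace

/-- The rank-one matrix `u·v` sending `w` to `v(w)·u`. -/
noncomputable def rankOne {n : ℕ} (u : Fin n → ℂ) (v : Module.Dual ℂ (Fin n → ℂ)) :
    Matrix (Fin n) (Fin n) ℂ :=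
  Matrix.of fun j k => v (Pi.single k 1) * u j

lemma hasDerivAt_cubic (a b c d : ℂ) :
    HasDerivAt (fun t : ℂ => a + b*t + c*t^2 + d*t^3) b 0 := by
  have h := ((((hasDerivAt_id (0:ℂ)).const_mul b).const_add a).fun_add
    ((hasDerivAt_pow 2 (0:ℂ)).const_mul c)).fun_add ((hasDerivAt_pow 3 (0:ℂ)).const_mul d)
  simpa using h

lemma piece_hasDerivAt {n : ℕ} (v φ : Module.Dual ℂ (Fin n → ℂ))
    (A X : Matrix (Fin n) (Fin n) ℂ) (u p : Fin n → ℂ) :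
    HasDerivAt (fun t : ℂ => (v + t • φ) ((A + t • X).mulVec (u + t • p)))
      (φ (A.mulVec u) + v (X.mulVec u) + v (A.mulVec p)) 0 := by
  have h : (fun t : ℂ => (v + t • φ) ((A + t • X).mulVec (u + t • p)))
      = fun t : ℂ => v (A.mulVec u)
          + (φ (A.mulVec u) + v (X.mulVec u) + v (A.mulVec p)) * t
          + (φ (X.mulVec u) + φ (A.mulVec p) + v (X.mulVec p)) * t^2
          + (φ (X.mulVec p)) * t^3 := by
    funext t
    simp [Matrix.add_mulVec, Matrix.mulVec_add, Matrix.smul_mulVec,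
      Matrix.mulVec_smul, LinearMap.add_apply, LinearMap.smul_apply, map_add,
      map_smul, smul_eq_mul]
    ring
  rw [h]
  exact hasDerivAt_cubic _ _ _ _

lemma tracePiece_hasDerivAt {n : ℕ} (A B C X Y Z : Matrix (Fin n) (Fin n) ℂ) :
    HasDerivAt (fun t : ℂ =>
        ((C + t • Z) * ((A + t • X) * (B + t • Y) - (B + t • Y) * (A + t • X))).trace)
      ((Z * (A*B - B*A)).trace + (C * (X*B + A*Y - Y*A - B*X)).trace) 0 := by
  have h : (fun t : ℂ =>
        ((C + t • Z) * ((A + t • X) * (B + t • Y) - (B + t • Y) * (A + t • X))).trace)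
      = fun t : ℂ => (C * (A*B - B*A)).trace
          + ((Z * (A*B - B*A)).trace + (C * (X*B + A*Y - Y*A - B*X)).trace) * t
          + ((Z * (X*B + A*Y - Y*A - B*X)).trace + (C * (X*Y - Y*X)).trace) * t^2
          + ((Z * (X*Y - Y*X)).trace) * t^3 := by
    funext t
    simp [add_mul, mul_add, mul_sub, sub_mul, smul_mul_assoc, mul_smul_comm, smul_smul,
      Matrix.trace_add, Matrix.trace_sub, Matrix.trace_smul, smul_eq_mul]
    ring
  rw [h]
  exact hasDerivAt_cubic _ _ _ _

lemma dual_apply_eq_sum {n : ℕ} (v : Module.Dual ℂ (Fin n → ℂ)) (y : Fin n → ℂ) :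
    v y = ∑ j, y j * v (Pi.single j 1) := by
  have hy : y = ∑ j, y j • (Pi.single j (1:ℂ) : Fin n → ℂ) := by
    funext k
    simp [Pi.single_apply]
  conv_lhs => rw [hy]
  simp [map_sum, smul_eq_mul]

lemma trace_rankOne {n : ℕ} (X : Matrix (Fin n) (Fin n) ℂ) (u : Fin n → ℂ)
    (v : Module.Dual ℂ (Fin n → ℂ)) :
    v (X.mulVec u) = (X * rankOne u v).trace := by
  rw [dual_apply_eq_sum]
  simp only [Matrix.trace, Matrix.mul_apply, rankOne, Matrix.diag, Matrix.mulVec,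
    dotProduct, Matrix.of_apply, Finset.sum_mul, Finset.mul_sum]
  exact Finset.sum_congr rfl fun j _ => Finset.sum_congr rfl fun k _ => by ring

lemma forall_dual_zero {n : ℕ} (x : Fin n → ℂ)
    (h : ∀ f : Module.Dual ℂ (Fin n → ℂ), f x = 0) : x = 0 := by
  funext j
  simpa using h (LinearMap.proj j)

lemma trace_mul_forall_zero {n : ℕ} (M : Matrix (Fin n) (Fin n) ℂ)
    (h : ∀ X : Matrix (Fin n) (Fin n) ℂ, (X * M).trace = 0) : M = 0 := by
  ext j k
  have := h (Matrix.single k j 1)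
  simpa [Matrix.trace, Matrix.mul_apply, Matrix.single, Matrix.diag,
    Finset.sum_ite_eq, Finset.sum_ite_eq', ite_and, Finset.sum_ite_eq] using this

lemma tmc {n : ℕ} (P Q R : Matrix (Fin n) (Fin n) ℂ) :
    (P * (Q * R)).trace = (Q * (R * P)).trace := by
  rw [Matrix.trace_mul_comm, mul_assoc]

lemma key_deriv (n r : ℕ)
    (u1 u2 : Fin r → (Fin n → ℂ)) (v : Fin r → Module.Dual ℂ (Fin n → ℂ))
    (A B C : Matrix (Fin n) (Fin n) ℂ)
    (p q : Fin r → (Fin n → ℂ)) (φ : Fin r → Module.Dual ℂ (Fin n → ℂ))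
    (X Y Z : Matrix (Fin n) (Fin n) ℂ) :
    deriv (fun t : ℂ =>
        Fpot n r (((u1, u2, v, A, B, C) : RepSp n r) + t • ((p, q, φ, X, Y, Z) : RepSp n r))) 0
      = (∑ i, (φ i (A.mulVec (u1 i)) - φ i (B.mulVec (u2 i))))
        + ∑ i, v i (A.mulVec (p i)) - ∑ i, v i (B.mulVec (q i))
        + (X * ((∑ i, rankOne (u1 i) (v i)) + (B*C - C*B))).trace
        - (Y * ((∑ i, rankOne (u2 i) (v i)) + (A*C - C*A))).trace
        + (Z * (A*B - B*A)).trace := by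
  have hfun : (fun t : ℂ =>
        Fpot n r (((u1, u2, v, A, B, C) : RepSp n r) + t • ((p, q, φ, X, Y, Z) : RepSp n r)))
      = fun t : ℂ =>
        (∑ i, ((v i + t • φ i) ((A + t • X).mulVec (u1 i + t • (p i)))
            - (v i + t • φ i) ((B + t • Y).mulVec (u2 i + t • (q i)))))
          + ((C + t • Z) * ((A + t • X) * (B + t • Y) - (B + t • Y) * (A + t • X))).trace := by
    funext t
    simp [Fpot, Prod.smul_mk, Prod.mk_add_mk]
  rw [hfun]
  rw [HasDerivAt.deriv ((HasDerivAt.fun_sum fun i _ =>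
    (piece_hasDerivAt (v i) (φ i) A X (u1 i) (p i)).fun_sub
      (piece_hasDerivAt (v i) (φ i) B Y (u2 i) (q i))).fun_add
    (tracePiece_hasDerivAt A B C X Y Z))]
  simp only [Matrix.mul_add, Matrix.mul_sub, Matrix.mul_sum, Matrix.trace_add,
    Matrix.trace_sub, Matrix.trace_sum, ← trace_rankOne, Finset.sum_sub_distrib,
    Finset.sum_add_distrib]
  rw [tmc C X B, tmc C A Y, tmc A Y C, tmc C Y A, tmc Y A C, tmc C B X, tmc B X C]
  ring

lemma ite_dual_apply {n : ℕ} {c : Prop} [Decidable c] (f : Module.Dual ℂ (Fin n → ℂ))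
    (y : Fin n → ℂ) : (if c then f else 0) y = if c then f y else 0 := by
  split <;> simp

/-- a point `(u₁, u₂, v, A, B, C)` is a critical point of the
superpotential `F` (all directional derivatives vanish) if and only if:
`AB = BA`; `vᵢ∘A = 0` and `vᵢ∘B = 0` for all `i`; `A u_{1,i} = B u_{2,i}` for all `i`;
`∑ᵢ u_{1,i}·vᵢ + BC − CB = 0`; and `∑ᵢ u_{2,i}·vᵢ + AC − CA = 0`. -/
theorem critical_points_of_superpotential (n r : ℕ) (hn : 1 ≤ n) (hr : 1 ≤ r)
    (u1 u2 : Fin r → (Fin n → ℂ)) (v : Fin r → Module.Dual ℂ (Fin n → ℂ))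
    (A B C : Matrix (Fin n) (Fin n) ℂ) :
    (∀ w : RepSp n r,
      deriv (fun t : ℂ => Fpot n r (((u1, u2, v, A, B, C) : RepSp n r) + t • w)) 0 = 0) ↔
      (A * B = B * A ∧
       (∀ i, (v i).comp A.mulVecLin = 0) ∧
       (∀ i, (v i).comp B.mulVecLin = 0) ∧
       (∀ i, A.mulVec (u1 i) = B.mulVec (u2 i)) ∧
       (∑ i, rankOne (u1 i) (v i)) + (B * C - C * B) = 0 ∧
       (∑ i, rankOne (u2 i) (v i)) + (A * C - C * A) = 0) := by
  constructor
  · intro h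
    have h' : ∀ (p q : Fin r → (Fin n → ℂ)) (φ : Fin r → Module.Dual ℂ (Fin n → ℂ))
        (X Y Z : Matrix (Fin n) (Fin n) ℂ),
        (∑ i, (φ i (A.mulVec (u1 i)) - φ i (B.mulVec (u2 i))))
          + ∑ i, v i (A.mulVec (p i)) - ∑ i, v i (B.mulVec (q i))
          + (X * ((∑ i, rankOne (u1 i) (v i)) + (B*C - C*B))).trace
          - (Y * ((∑ i, rankOne (u2 i) (v i)) + (A*C - C*A))).trace
          + (Z * (A*B - B*A)).trace = 0 := by
      intro p q φ X Y Z
      rw [← key_deriv n r u1 u2 v A B C p q φ X Y Z]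
      exact h (p, q, φ, X, Y, Z)
    refine ⟨?_, ?_, ?_, ?_, ?_, ?_⟩
    · have := trace_mul_forall_zero (A*B - B*A) fun Z => by simpa using h' 0 0 0 0 0 Z
      linear_combination (norm := abel) this
    · intro i
      refine LinearMap.ext fun x => ?_
      have := h' (Pi.single i x) 0 0 0 0 0
      simpa [Pi.single_apply, apply_ite (A.mulVec), apply_ite (v _), Finset.sum_ite_eq',
        Matrix.mulVecLin_apply] using this
    · intro i
      refine LinearMap.ext fun x => ?_
      have := h' 0 (Pi.single i x) 0 0 0 0
      simpa [Pi.single_apply, apply_ite (B.mulVec), apply_ite (v _), Finset.sum_ite_eq',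
        Matrix.mulVecLin_apply] using this
    · intro i
      have hv : ∀ f : Module.Dual ℂ (Fin n → ℂ), f (A.mulVec (u1 i) - B.mulVec (u2 i)) = 0 := by
        intro f
        have := h' 0 0 (Pi.single i f) 0 0 0
        simp only [Pi.single_apply, apply_ite] at this
        simp only [map_sub]
        simpa [ite_dual_apply, Finset.sum_ite_eq'] using this
      have := forall_dual_zero _ hv
      exact sub_eq_zero.mp this
    · exact trace_mul_forall_zero _ fun X => by simpa using h' 0 0 0 X 0 0
    · refine trace_mul_forall_zero _ fun Y => ?_
      have := h' 0 0 0 0 Y 0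
      simpa [neg_eq_zero] using this
  · rintro ⟨h1, h2, h3, h4, h5, h6⟩ ⟨p, q, φ, X, Y, Z⟩
    rw [key_deriv n r u1 u2 v A B C p q φ X Y Z, h5, h6]
    have hA : ∀ i x, v i (A.mulVec x) = 0 := fun i x => by
      simpa using LinearMap.congr_fun (h2 i) x
    have hB : ∀ i x, v i (B.mulVec x) = 0 := fun i x => by
      simpa using LinearMap.congr_fun (h3 i) x
    simp [h4, hA, hB, sub_eq_zero.mpr h1]
end

section
/- For every integer r ≥ 1 and every integer n ≥ 0, the number a_n equals the coefficient of q^n in the power series ∏_{b=1}^{n} ( ∏_{k=1}^{n} (1−q^{bk})^{−1} )^{r·φ(b)} ∈ ℤ⟦q⟧, where φ is Euler's totient function; equivalently, ∑_{n≥0} a_n q^n equals the product, over all pairs of integers (a,b) with b ≥ 1, 0 ≤ a < rb and gcd(a,b) = 1, of ∏_{k≥1} (1−q^{bk})^{−1}. -/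
open Finset PowerSeries

/-- `p(n)`, the number of partitions of `n` (with `p(0) = 1`). -/
def pcount (n : ℕ) : ℕ := Fintype.card (Nat.Partition n)

open Classical in
/-- `a_n := ∑ ∏_{i=1}^k p(gcd(dᵢ, vᵢ))`, where the sum ranges over all `k ≥ 0` and all
tuples `((d₁,v₁),…,(d_k,v_k))` of pairs of nonnegative integers with `dᵢ ≥ 1`,
`d₁+⋯+d_k = n`, `vᵢ·d_{i+1} < v_{i+1}·dᵢ` for `1 ≤ i < k`, and `v_k < r·d_k`
(i.e. `0 ≤ v₁/d₁ < ⋯ < v_k/d_k < r`).  Any such tuple necessarily has `k ≤ n`,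
`dᵢ ≤ n` and `vᵢ ≤ r·n`, so the tuples are encoded as functions
`Fin k → Fin (n+1) × Fin (r·n+1)`.  The empty tuple (`k = 0`) contributes `1` to `a_0`. -/
noncomputable def aCoeff (r n : ℕ) : ℕ :=
  ∑ k ∈ Finset.range (n + 1),
    ∑ f : Fin k → Fin (n + 1) × Fin (r * n + 1),
      if (∀ i, 1 ≤ ((f i).1 : ℕ)) ∧ (∑ i, ((f i).1 : ℕ)) = n ∧
          (∀ i j : Fin k, (j : ℕ) = (i : ℕ) + 1 →
            ((f i).2 : ℕ) * ((f j).1 : ℕ) < ((f j).2 : ℕ) * ((f i).1 : ℕ)) ∧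
          (∀ i : Fin k, (i : ℕ) = k - 1 → ((f i).2 : ℕ) < r * ((f i).1 : ℕ))
      then ∏ i, pcount (Nat.gcd ((f i).1 : ℕ) ((f i).2 : ℕ))
      else 0



namespace SlopeAux

noncomputable section

variable {α : Type*}

open scoped Classical

def indicatorSeries (α : Type*) [Semiring α] (s : Set ℕ) : PowerSeries α :=
  PowerSeries.mk fun n => if n ∈ s then 1 else 0

theorem coeff_indicator (s : Set ℕ) [Semiring α] (n : ℕ) :
    coeff (R := α) n (indicatorSeries _ s) = if n ∈ s then 1 else 0 :=
  coeff_mk _ _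

theorem coeff_indicator_pos (s : Set ℕ) [Semiring α] (n : ℕ) (h : n ∈ s) :
    coeff (R := α) n (indicatorSeries _ s) = 1 := by rw [coeff_indicator, if_pos h]

theorem coeff_indicator_neg (s : Set ℕ) [Semiring α] (n : ℕ) (h : n ∉ s) :
    coeff (R := α) n (indicatorSeries _ s) = 0 := by rw [coeff_indicator, if_neg h]

theorem constantCoeff_indicator (s : Set ℕ) [Semiring α] :
    constantCoeff (R := α) (indicatorSeries _ s) = if 0 ∈ s then 1 else 0 :=
  rfl

theorem two_series (i : ℕ) [Semiring α] :
    1 + (X : PowerSeries α) ^ i.succ = indicatorSeries α {0, i.succ} := by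
  ext n
  simp only [coeff_indicator, coeff_one, coeff_X_pow, Set.mem_insert_iff, Set.mem_singleton_iff,
    map_add]
  cases' n with d
  · simp [(Nat.succ_ne_zero i).symm]
  · simp [Nat.succ_ne_zero d]

theorem num_series' [Field α] (i : ℕ) :
    (1 - (X : PowerSeries α) ^ (i + 1))⁻¹ = indicatorSeries α {k | i + 1 ∣ k} := by
  rw [PowerSeries.inv_eq_iff_mul_eq_one]
  · ext n
    cases n with
    | zero => simp [mul_sub, zero_pow, constantCoeff_indicator]
    | succ n =>
      simp only [coeff_one, if_false, mul_sub, mul_one, coeff_indicator,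
        LinearMap.map_sub, reduceCtorEq]
      simp_rw [coeff_mul, coeff_X_pow, coeff_indicator, @boole_mul _ _ _ _]
      erw [@sum_ite _ _ _ _ _ (fun _ => Classical.propDecidable _), sum_ite]
      simp_rw [@filter_filter _ _ _ _ _, sum_const_zero, add_zero, sum_const, nsmul_eq_mul, mul_one,
        sub_eq_iff_eq_add, zero_add]
      symm
      split_ifs with h
      · suffices #{a ∈ antidiagonal (n + 1) | i + 1 ∣ a.fst ∧ a.snd = i + 1} = 1 by
          simp only [Set.mem_setOf_eq]; convert congr_arg ((↑) : ℕ → α) this; norm_cast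
        rw [card_eq_one]
        cases' h with p hp
        refine ⟨((i + 1) * (p - 1), i + 1), ?_⟩
        ext ⟨a₁, a₂⟩
        simp only [mem_filter, Prod.mk_inj, HasAntidiagonal.mem_antidiagonal, mem_singleton]
        constructor
        · rintro ⟨a_left, ⟨a, rfl⟩, rfl⟩
          refine ⟨?_, rfl⟩
          rw [Nat.mul_sub_left_distrib, ← hp, ← a_left, mul_one, Nat.add_sub_cancel]
        · rintro ⟨rfl, rfl⟩
          match p with
          | 0 => rw [mul_zero] at hp; cases hp
          | p + 1 => rw [hp]; simp [mul_add]
      · suffices #{a ∈ antidiagonal (n + 1) | i + 1 ∣ a.fst ∧ a.snd = i + 1} = 0 by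
          simp only [Set.mem_setOf_eq]; convert congr_arg ((↑) : ℕ → α) this; norm_cast
        rw [card_eq_zero]
        apply eq_empty_of_forall_notMem
        simp only [Prod.forall, mem_filter, not_and, HasAntidiagonal.mem_antidiagonal]
        rintro _ h₁ h₂ ⟨a, rfl⟩ rfl
        apply h
        simp [← h₂]
  · simp [zero_pow]

def mkOdd : ℕ ↪ ℕ :=
  ⟨fun i => 2 * i + 1, fun x y h => by linarith⟩

-- The main workhorse of the partition theorem proof.
theorem partialGF_prop (α : Type*) [CommSemiring α] (n : ℕ) (s : Finset ℕ) (hs : ∀ i ∈ s, 0 < i)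
    (c : ℕ → Set ℕ) (hc : ∀ i, i ∉ s → 0 ∈ c i) :
    #{p : n.Partition | (∀ j, p.parts.count j ∈ c j) ∧ ∀ j ∈ p.parts, j ∈ s} =
      coeff (R := α) n (∏ i ∈ s, indicatorSeries α ((· * i) '' c i)) := by
  simp_rw [coeff_prod, coeff_indicator, prod_boole, sum_boole]
  apply congr_arg
  simp only [mem_univ, forall_true_left, not_and, not_forall, exists_prop,
    Set.mem_image, not_exists]
  set φ : (a : Nat.Partition n) →
    a ∈ filter (fun p ↦ (∀ (j : ℕ), Multiset.count j p.parts ∈ c j) ∧ ∀ j ∈ p.parts, j ∈ s) univ →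
    ℕ →₀ ℕ := fun p _ => {
      toFun := fun i => Multiset.count i p.parts • i
      support := Finset.filter (fun i => i ≠ 0) p.parts.toFinset
      mem_support_toFun := fun a => by
        simp only [smul_eq_mul, ne_eq, mul_eq_zero, Multiset.count_eq_zero]
        rw [not_or, not_not]
        simp only [Multiset.mem_toFinset, not_not, mem_filter] }
  refine Finset.card_bij φ ?_ ?_ ?_
  · intro a ha
    simp only [φ, not_forall, not_exists, not_and, exists_prop, mem_filter]
    rw [mem_finsuppAntidiag]
    dsimp only [ne_eq, smul_eq_mul, id_eq, eq_mpr_eq_cast, le_eq_subset, Finsupp.coe_mk]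
    simp only [mem_univ, forall_true_left, not_and, not_forall, exists_prop,
      mem_filter, true_and] at ha
    refine ⟨⟨?_, fun i ↦ ?_⟩, fun i _ ↦ ⟨a.parts.count i, ha.1 i, rfl⟩⟩
    · conv_rhs => simp [← a.parts_sum]
      rw [sum_multiset_count_of_subset _ s]
      · simp only [smul_eq_mul]
      · intro i
        simp only [Multiset.mem_toFinset, not_not, mem_filter]
        apply ha.2
    · simp only [ne_eq, Multiset.mem_toFinset, not_not, mem_filter, and_imp]
      exact fun hi _ ↦ ha.2 i hi
  · intro p₁ hp₁ p₂ hp₂ h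
    apply Nat.Partition.ext
    simp only [true_and, mem_univ, mem_filter] at hp₁ hp₂
    ext i
    simp only [φ, ne_eq, Multiset.mem_toFinset, not_not, smul_eq_mul, Finsupp.mk.injEq] at h
    by_cases hi : i = 0
    · rw [hi]
      rw [Multiset.count_eq_zero_of_notMem]
      · rw [Multiset.count_eq_zero_of_notMem]
        intro a; exact Nat.lt_irrefl 0 (hs 0 (hp₂.2 0 a))
      intro a; exact Nat.lt_irrefl 0 (hs 0 (hp₁.2 0 a))
    · rw [← mul_left_inj' hi]
      rw [funext_iff] at h
      exact h.2 i
  · simp only [φ, mem_filter, mem_finsuppAntidiag, mem_univ, exists_prop, true_and, and_assoc]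
    rintro f ⟨hf, hf₃, hf₄⟩
    have hf' : f ∈ finsuppAntidiag s n := mem_finsuppAntidiag.mpr ⟨hf, hf₃⟩
    simp only [mem_finsuppAntidiag] at hf'
    refine ⟨⟨∑ i ∈ s, Multiset.replicate (f i / i) i, ?_, ?_⟩, ?_, ?_, ?_⟩
    · intro i hi
      simp only [exists_prop, Multiset.mem_sum, mem_map, Function.Embedding.coeFn_mk] at hi
      rcases hi with ⟨t, ht, z⟩
      apply hs
      rwa [Multiset.eq_of_mem_replicate z]
    · simp_rw [Multiset.sum_sum, Multiset.sum_replicate, Nat.nsmul_eq_mul]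
      rw [← hf'.1]
      refine sum_congr rfl fun i hi => Nat.div_mul_cancel ?_
      rcases hf₄ i hi with ⟨w, _, hw₂⟩
      rw [← hw₂]
      exact dvd_mul_left _ _
    · intro i
      simp_rw [Multiset.count_sum', Multiset.count_replicate, sum_ite_eq']
      split_ifs with h
      · rcases hf₄ i h with ⟨w, hw₁, hw₂⟩
        rwa [← hw₂, Nat.mul_div_cancel _ (hs i h)]
      · exact hc _ h
    · intro i hi
      rw [Multiset.mem_sum] at hi
      rcases hi with ⟨j, hj₁, hj₂⟩
      rwa [Multiset.eq_of_mem_replicate hj₂]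
    · ext i
      simp_rw [Multiset.count_sum', Multiset.count_replicate, sum_ite_eq']
      simp only [ne_eq, Multiset.mem_toFinset, not_not, smul_eq_mul, ite_mul,
        zero_mul, Finsupp.coe_mk]
      split_ifs with h
      · apply Nat.div_mul_cancel
        rcases hf₄ i h with ⟨w, _, hw₂⟩
        apply Dvd.intro_left _ hw₂
      · apply symm
        rw [← Finsupp.notMem_support_iff]
        exact notMem_mono hf'.2 h


theorem sum_map_div (b : ℕ) (hb : b ≠ 0) (l : Multiset ℕ) (h : ∀ j ∈ l, b ∣ j) :
    (l.map (fun j => j / b)).sum = l.sum / b := by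
  induction l using Multiset.induction with
  | empty => simp
  | cons a s ih =>
    have ha : b ∣ a := h a (Multiset.mem_cons_self a s)
    have hs : b ∣ s.sum := Multiset.dvd_sum (fun x hx => h x (Multiset.mem_cons_of_mem hx))
    simp only [Multiset.map_cons, Multiset.sum_cons]
    rw [ih (fun j hj => h j (Multiset.mem_cons_of_mem hj))]
    obtain ⟨a', rfl⟩ := ha
    obtain ⟨s', hs'⟩ := hs
    rw [hs', Nat.mul_div_cancel_left _ (Nat.pos_of_ne_zero hb), ← Nat.mul_add,
      Nat.mul_div_cancel_left _ (Nat.pos_of_ne_zero hb),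
      Nat.mul_div_cancel_left _ (Nat.pos_of_ne_zero hb)]

def upPart (b t : ℕ) (hb : b ≠ 0) (hd : b ∣ t) (q : (t/b).Partition) : t.Partition where
  parts := q.parts.map (fun j => b * j)
  parts_pos := by
    intro i hi
    simp only [Multiset.mem_map] at hi
    obtain ⟨k, hk, rfl⟩ := hi
    exact Nat.mul_pos (Nat.pos_of_ne_zero hb) (q.parts_pos hk)
  parts_sum := by
    rw [show (fun j => b * j) = (fun j => b * id j) by rfl, Multiset.sum_map_mul_left,
      Multiset.map_id, q.parts_sum, Nat.mul_div_cancel' hd]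

def downPart (b t : ℕ) (hb : b ≠ 0) (p : t.Partition) (hp : ∀ j ∈ p.parts, b ∣ j) :
    (t/b).Partition where
  parts := p.parts.map (fun j => j / b)
  parts_pos := by
    intro i hi
    simp only [Multiset.mem_map] at hi
    obtain ⟨k, hk, rfl⟩ := hi
    exact Nat.div_pos (Nat.le_of_dvd (p.parts_pos hk) (hp k hk)) (Nat.pos_of_ne_zero hb)
  parts_sum := by rw [sum_map_div b hb _ hp, p.parts_sum]

theorem coeff_Q (b t n : ℕ) (hb : 1 ≤ b) (ht : t ≤ n) :
    coeff (R := ℚ) t (∏ k ∈ Icc 1 n, (1 - (X : PowerSeries ℚ) ^ (b * k))⁻¹)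
      = if b ∣ t then (pcount (t / b) : ℚ) else 0 := by
  have h1 : (∏ k ∈ Icc 1 n, (1 - (X : PowerSeries ℚ) ^ (b * k))⁻¹)
      = ∏ i ∈ (Icc 1 n).map ⟨fun k => b * k, mul_right_injective₀ (Nat.one_le_iff_ne_zero.mp hb)⟩,
          indicatorSeries ℚ ((· * i) '' Set.univ) := by
    rw [Finset.prod_map]
    refine Finset.prod_congr rfl fun k hk => ?_
    have hk1 : 1 ≤ k := (Finset.mem_Icc.mp hk).1
    have hpos : 1 ≤ b * k := Nat.one_le_iff_ne_zero.mpr (by positivity)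
    have hbk : b * k = (b * k - 1) + 1 := (Nat.succ_pred_eq_of_pos hpos).symm
    have hset : ((· * (b * k)) '' Set.univ : Set ℕ) = {m | b * k ∣ m} := by
      ext m
      simp [dvd_iff_exists_eq_mul_left, eq_comm]
    rw [Function.Embedding.coeFn_mk, hset, hbk, num_series']
  rw [h1, ← partialGF_prop ℚ t _ (fun i hi => by
      simp only [Finset.mem_map, Function.Embedding.coeFn_mk] at hi
      obtain ⟨k, hk, rfl⟩ := hi
      have := (Finset.mem_Icc.mp hk).1
      positivity) (fun _ => Set.univ) (fun _ _ => trivial)]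
  have hb0 : b ≠ 0 := by omega
  have hdiv : ∀ p : t.Partition,
      (∀ j ∈ p.parts, j ∈ (Icc 1 n).map
        ⟨fun k => b * k, mul_right_injective₀ (Nat.one_le_iff_ne_zero.mp hb)⟩) →
      ∀ j ∈ p.parts, b ∣ j := by
    intro p hall j hj
    obtain ⟨k, _, rfl⟩ : ∃ k, k ∈ Icc 1 n ∧ b * k = j := by
      simpa [Finset.mem_map] using hall j hj
    exact Dvd.intro k rfl
  have hcard : #{p : t.Partition | (∀ j, p.parts.count j ∈ (Set.univ : Set ℕ)) ∧
      ∀ j ∈ p.parts, j ∈ (Icc 1 n).map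
        ⟨fun k => b * k, mul_right_injective₀ (Nat.one_le_iff_ne_zero.mp hb)⟩}
      = if b ∣ t then pcount (t / b) else 0 := by
    by_cases hd : b ∣ t
    · rw [if_pos hd, pcount, Fintype.card, eq_comm]
      refine Finset.card_bij' (fun q _ => upPart b t hb0 hd q)
        (fun p hp => downPart b t hb0 p (hdiv p ?_)) ?_ ?_ ?_ ?_
      · simp only [Finset.mem_filter, Finset.mem_univ, true_and, Set.mem_setOf_eq] at hp
        exact hp.2
      · -- hi
        intro q _
        simp only [Finset.mem_filter, Finset.mem_univ, true_and, Set.mem_setOf_eq]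
        refine ⟨fun j => trivial, fun j hj => ?_⟩
        simp only [upPart, Multiset.mem_map] at hj
        obtain ⟨k, hk, rfl⟩ := hj
        simp only [Finset.mem_map, Function.Embedding.coeFn_mk]
        refine ⟨k, Finset.mem_Icc.mpr ⟨q.parts_pos hk, ?_⟩, rfl⟩
        calc k ≤ q.parts.sum := Multiset.le_sum_of_mem hk
        _ = t / b := q.parts_sum
        _ ≤ t := Nat.div_le_self _ _
        _ ≤ n := ht
      · intro p _
        exact Finset.mem_univ _
      · -- left inverse
        intro q _
        apply Nat.Partition.ext
        simp only [upPart, downPart, Multiset.map_map, Function.comp]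
        have : ∀ j ∈ q.parts, b * j / b = j := fun j _ =>
          Nat.mul_div_cancel_left j (Nat.pos_of_ne_zero hb0)
        rw [Multiset.map_congr rfl this, Multiset.map_id']
      · -- right inverse
        intro p hp
        simp only [Finset.mem_filter, Finset.mem_univ, true_and, Set.mem_setOf_eq] at hp
        apply Nat.Partition.ext
        simp only [upPart, downPart, Multiset.map_map, Function.comp]
        have : ∀ j ∈ p.parts, b * (j / b) = j := fun j hj =>
          Nat.mul_div_cancel' (hdiv p hp.2 j hj)
        rw [Multiset.map_congr rfl this, Multiset.map_id']
    · rw [if_neg hd]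
      rw [Finset.card_eq_zero, Finset.filter_eq_empty_iff]
      intro p _
      simp only [Set.mem_setOf_eq, not_and_or]
      right
      intro hall
      apply hd
      rw [← p.parts_sum]
      exact Multiset.dvd_sum (hdiv p hall)
  rw [hcard]
  split_ifs <;> simp

theorem count_coprime (b : ℕ) (hb : 1 ≤ b) (r : ℕ) :
    #((range (r * b)).filter (fun a => Nat.Coprime a b)) = r * Nat.totient b := by
  induction r with
  | zero => simp
  | succ r ih =>
    have hsplit : (r + 1) * b = r * b + b := by ring
    have hdisj : Disjoint ((range (r * b)).filter (fun a => Nat.Coprime a b))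
        (((range b).map (addLeftEmbedding (r * b))).filter (fun a => Nat.Coprime a b)) := by
      apply Finset.disjoint_filter_filter
      rw [Finset.disjoint_left]
      intro a ha hma
      simp only [Finset.mem_range] at ha
      simp only [Finset.mem_map, addLeftEmbedding_apply] at hma
      obtain ⟨c, _, rfl⟩ := hma
      omega
    rw [hsplit, Finset.range_add, Finset.filter_union, Finset.card_union_of_disjoint hdisj, ih,
      Finset.filter_map, Finset.card_map]
    have heq : (range b).filter ((fun a => Nat.Coprime a b) ∘ ⇑(addLeftEmbedding (r * b)))
        = (range b).filter (fun a => Nat.Coprime b a) := by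
      apply Finset.filter_congr
      intro a _
      simp only [Function.comp_apply, addLeftEmbedding_apply]
      rw [add_comm, Nat.coprime_add_mul_right_left]
      exact Nat.coprime_comm
    have htot : ((range b).filter (fun a => Nat.Coprime b a)).card = Nat.totient b := rfl
    rw [heq, htot]
    ring

/-- The finite set of slopes `(b, a)`, `1 ≤ b ≤ n`, `0 ≤ a < r * b`, `gcd(a,b) = 1`. -/
def slopes (r n : ℕ) : Finset (ℕ × ℕ) :=
  ((Icc 1 n) ×ˢ (range (r * n))).filter (fun x => x.2 < r * x.1 ∧ Nat.Coprime x.2 x.1)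

theorem mem_slopes {r n : ℕ} {x : ℕ × ℕ} :
    x ∈ slopes r n ↔ 1 ≤ x.1 ∧ x.1 ≤ n ∧ x.2 < r * x.1 ∧ Nat.Coprime x.2 x.1 := by
  simp only [slopes, Finset.mem_filter, Finset.mem_product, Finset.mem_Icc, Finset.mem_range]
  constructor
  · rintro ⟨⟨⟨h1, h2⟩, _⟩, h4, h5⟩; exact ⟨h1, h2, h4, h5⟩
  · rintro ⟨h1, h2, h4, h5⟩
    exact ⟨⟨⟨h1, h2⟩, lt_of_lt_of_le h4 (Nat.mul_le_mul_left r h2)⟩, h4, h5⟩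

theorem card_slopes_fiber {r n : ℕ} {b : ℕ} (hb : b ∈ Icc 1 n) :
    #((slopes r n).filter (fun x => x.1 = b)) = r * Nat.totient b := by
  rw [← count_coprime b (Finset.mem_Icc.mp hb).1 r]
  apply Finset.card_nbij' (fun x => x.2) (fun a => (b, a))
  · intro x hx
    simp only [Finset.mem_coe, Finset.mem_filter] at hx
    obtain ⟨hx1, hfib⟩ := hx
    rw [mem_slopes] at hx1
    simp only [Finset.mem_coe, Finset.mem_filter, Finset.mem_range]
    rw [hfib] at hx1
    exact ⟨hx1.2.2.1, hx1.2.2.2⟩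
  · intro a ha
    simp only [Finset.mem_coe, Finset.mem_filter, Finset.mem_range] at ha
    have hb' := Finset.mem_Icc.mp hb
    refine Finset.mem_coe.mpr (Finset.mem_filter.mpr ⟨mem_slopes.mpr ⟨hb'.1, hb'.2, ha.1, ha.2⟩, rfl⟩)
  · intro x hx
    simp only [Finset.mem_coe, Finset.mem_filter] at hx
    rw [← hx.2]
  · intro a _
    rfl

/-- The middle combinatorial quantity. -/
def M (r n : ℕ) : ℕ :=
  ∑ l ∈ (slopes r n).finsuppAntidiag n,
    ∏ x ∈ slopes r n, (if x.1 ∣ l x then pcount (l x / x.1) else 0)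

theorem lemmaA (r n : ℕ) :
    (PowerSeries.coeff (R := ℚ) n)
        (∏ b ∈ Finset.Icc 1 n,
          (∏ k ∈ Finset.Icc 1 n,
            ((1 - (PowerSeries.X : PowerSeries ℚ) ^ (b * k))⁻¹)) ^ (r * Nat.totient b))
      = M r n := by
  have h1 : (∏ b ∈ Finset.Icc 1 n,
        (∏ k ∈ Finset.Icc 1 n,
          ((1 - (PowerSeries.X : PowerSeries ℚ) ^ (b * k))⁻¹)) ^ (r * Nat.totient b))
      = ∏ x ∈ slopes r n,
          (∏ k ∈ Finset.Icc 1 n, ((1 - (PowerSeries.X : PowerSeries ℚ) ^ (x.1 * k))⁻¹)) := by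
    rw [← Finset.prod_fiberwise_of_maps_to (g := Prod.fst)
      (fun x hx => Finset.mem_Icc.mpr ⟨(mem_slopes.mp hx).1, (mem_slopes.mp hx).2.1⟩)
      (fun x => ∏ k ∈ Finset.Icc 1 n, ((1 - (PowerSeries.X : PowerSeries ℚ) ^ (x.1 * k))⁻¹))]
    refine Finset.prod_congr rfl fun b hb => ?_
    rw [← card_slopes_fiber (r := r) hb, ← Finset.prod_const]
    refine Finset.prod_congr rfl fun x hx => ?_
    have : x.1 = b := (Finset.mem_filter.mp hx).2
    rw [this]
  rw [h1, PowerSeries.coeff_prod]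
  rw [M, Nat.cast_sum]
  refine Finset.sum_congr rfl fun l hl => ?_
  rw [Nat.cast_prod]
  refine Finset.prod_congr rfl fun x hx => ?_
  have hln : l x ≤ n := by
    rw [Finset.mem_finsuppAntidiag] at hl
    calc l x ≤ ∑ y ∈ slopes r n, l y := Finset.single_le_sum (fun _ _ => Nat.zero_le _) hx
    _ = n := hl.1
  rw [coeff_Q x.1 (l x) n (mem_slopes.mp hx).1 hln]
  split_ifs <;> simp
def keyQ (x : ℕ × ℕ) : ℚ := (x.2 : ℚ) / (x.1 : ℚ)

theorem keyQ_lt_iff {x y : ℕ × ℕ} (hx : 1 ≤ x.1) (hy : 1 ≤ y.1) :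
    keyQ x < keyQ y ↔ x.2 * y.1 < y.2 * x.1 := by
  have hx' : (0 : ℚ) < x.1 := by exact_mod_cast hx
  have hy' : (0 : ℚ) < y.1 := by exact_mod_cast hy
  rw [keyQ, keyQ, div_lt_div_iff₀ hx' hy']
  exact_mod_cast Iff.rfl

theorem keyQ_injOn {r n : ℕ} (s t : ↥(slopes r n)) (h : keyQ s.val = keyQ t.val) : s = t := by
  obtain ⟨⟨b, a⟩, hs⟩ := s
  obtain ⟨⟨b', a'⟩, ht⟩ := t
  rw [mem_slopes] at hs ht
  simp only at hs ht
  obtain ⟨hb1, hbn, har, hco⟩ := hs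
  obtain ⟨hb1', hbn', har', hco'⟩ := ht
  have hb : ((b:ℚ)) ≠ 0 := by exact_mod_cast Nat.one_le_iff_ne_zero.mp hb1
  have hb' : ((b':ℚ)) ≠ 0 := by exact_mod_cast Nat.one_le_iff_ne_zero.mp hb1'
  simp only [keyQ] at h
  rw [div_eq_div_iff hb hb'] at h
  have hcross : a * b' = a' * b := by exact_mod_cast h
  have h1 : b ∣ a * b' := ⟨a', by rw [hcross]; ring⟩
  have h2 : b' ∣ a' * b := ⟨a, by rw [← hcross]; ring⟩
  have hbb : b ∣ b' := (Nat.Coprime.symm hco).dvd_of_dvd_mul_left h1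
  have hbb' : b' ∣ b := (Nat.Coprime.symm hco').dvd_of_dvd_mul_left h2
  have hbeq : b = b' := Nat.dvd_antisymm hbb hbb'
  subst hbeq
  have : a = a' := Nat.eq_of_mul_eq_mul_right (by omega) hcross
  subst this
  rfl

/-- wrapper for elements of `slopes r n`, carrying the slope linear order. -/
def SlopeSub (r n : ℕ) : Type := {x : ℕ × ℕ // x ∈ slopes r n}

namespace SlopeSub

variable {r n : ℕ}

/-- underlying pair -/
def val (s : SlopeSub r n) : ℕ × ℕ := Subtype.val s

theorem prop (s : SlopeSub r n) : s.val ∈ slopes r n := Subtype.prop s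

theorem val_injective : Function.Injective (val : SlopeSub r n → ℕ × ℕ) :=
  fun _ _ h => Subtype.ext h

theorem keyQ_val_injective :
    Function.Injective (fun s : SlopeSub r n => keyQ s.val) := by
  intro s t h
  exact Subtype.ext (congrArg Subtype.val (keyQ_injOn ⟨s.val, s.prop⟩ ⟨t.val, t.prop⟩ h))

noncomputable instance : LinearOrder (SlopeSub r n) :=
  LinearOrder.lift' (fun s => keyQ s.val) keyQ_val_injective

instance : Fintype (SlopeSub r n) := inferInstanceAs (Fintype ↥(slopes r n))

instance : DecidableEq (SlopeSub r n) := inferInstanceAs (DecidableEq ↥(slopes r n))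

theorem lt_iff {s t : SlopeSub r n} : s < t ↔ keyQ s.val < keyQ t.val := Iff.rfl

theorem le_iff {s t : SlopeSub r n} : s ≤ t ↔ keyQ s.val ≤ keyQ t.val := Iff.rfl

end SlopeSub

theorem keyQ_lt_nat {x : ℕ × ℕ} (hx : 1 ≤ x.1) (r : ℕ) :
    keyQ x < (r : ℚ) ↔ x.2 < r * x.1 := by
  have hx' : (0 : ℚ) < x.1 := by exact_mod_cast hx
  rw [keyQ, div_lt_iff₀ hx']
  exact_mod_cast Iff.rfl

section Chain

variable {r n k : ℕ} (f : Fin k → Fin (n + 1) × Fin (r * n + 1))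

/-- slope of the `i`-th pair as a rational. -/
def sl (i : Fin k) : ℚ := keyQ (((f i).1 : ℕ), ((f i).2 : ℕ))

theorem chain_strictMono (h1 : ∀ i, 1 ≤ ((f i).1 : ℕ))
    (h3 : ∀ i j : Fin k, (j : ℕ) = (i : ℕ) + 1 →
      ((f i).2 : ℕ) * ((f j).1 : ℕ) < ((f j).2 : ℕ) * ((f i).1 : ℕ)) :
    StrictMono (sl f) := by
  cases k with
  | zero => intro i; exact i.elim0
  | succ m =>
    apply Fin.strictMono_iff_lt_succ.mpr
    intro i
    apply (keyQ_lt_iff (h1 _) (h1 _)).mpr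
    apply h3
    simp

theorem chain_lt (h1 : ∀ i, 1 ≤ ((f i).1 : ℕ))
    (h3 : ∀ i j : Fin k, (j : ℕ) = (i : ℕ) + 1 →
      ((f i).2 : ℕ) * ((f j).1 : ℕ) < ((f j).2 : ℕ) * ((f i).1 : ℕ))
    (h4 : ∀ i : Fin k, (i : ℕ) = k - 1 → ((f i).2 : ℕ) < r * ((f i).1 : ℕ)) :
    ∀ i, ((f i).2 : ℕ) < r * ((f i).1 : ℕ) := by
  cases k with
  | zero => intro i; exact i.elim0
  | succ m =>
    intro i
    have hmono := chain_strictMono f h1 h3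
    have hlast := h4 (Fin.last m) (by simp [Fin.last])
    have h5 : sl f i ≤ sl f (Fin.last m) := hmono.monotone (Fin.le_last i)
    have h6 : sl f (Fin.last m) < (r : ℚ) := (keyQ_lt_nat (h1 _) r).mpr hlast
    exact (keyQ_lt_nat (h1 _) r).mp (lt_of_le_of_lt h5 h6)

end Chain

section PhiSec

variable {r n k : ℕ} (f : Fin k → Fin (n + 1) × Fin (r * n + 1))

/-- gcd of the `i`-th pair. -/
def gcdi (i : Fin k) : ℕ := Nat.gcd ((f i).1 : ℕ) ((f i).2 : ℕ)

/-- the reduced slope of the `i`-th pair. -/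
def red (i : Fin k) : ℕ × ℕ := (((f i).1 : ℕ) / gcdi f i, ((f i).2 : ℕ) / gcdi f i)

/-- the finitely supported function recording the pairs of `f`, indexed by reduced slope,
with value the total denominator. -/
noncomputable def Phi : (ℕ × ℕ) →₀ ℕ := ∑ i : Fin k, Finsupp.single (red f i) ((f i).1 : ℕ)

theorem gcdi_pos (h1 : ∀ i, 1 ≤ ((f i).1 : ℕ)) (i : Fin k) : 0 < gcdi f i :=
  Nat.gcd_pos_of_pos_left _ (h1 i)

theorem red_keyQ (h1 : ∀ i, 1 ≤ ((f i).1 : ℕ)) (i : Fin k) : keyQ (red f i) = sl f i := by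
  obtain ⟨D, hD⟩ : gcdi f i ∣ ((f i).1 : ℕ) := Nat.gcd_dvd_left _ _
  obtain ⟨V, hV⟩ : gcdi f i ∣ ((f i).2 : ℕ) := Nat.gcd_dvd_right _ _
  have hg : (0:ℚ) < (gcdi f i : ℚ) := by exact_mod_cast gcdi_pos f h1 i
  rw [keyQ, red, sl, keyQ]
  simp only [hD, hV]
  rw [Nat.mul_div_cancel_left _ (gcdi_pos f h1 i), Nat.mul_div_cancel_left _ (gcdi_pos f h1 i)]
  push_cast
  rw [mul_div_mul_left _ _ (ne_of_gt hg)]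

theorem red_fst_pos (h1 : ∀ i, 1 ≤ ((f i).1 : ℕ)) (i : Fin k) : 0 < (red f i).1 :=
  Nat.div_pos (Nat.le_of_dvd (h1 i) (Nat.gcd_dvd_left _ _)) (gcdi_pos f h1 i)

theorem red_div (h1 : ∀ i, 1 ≤ ((f i).1 : ℕ)) (i : Fin k) :
    ((f i).1 : ℕ) / (red f i).1 = gcdi f i :=
  Nat.div_div_self (Nat.gcd_dvd_left _ _) (by have := h1 i; omega)

theorem red_mem (h1 : ∀ i, 1 ≤ ((f i).1 : ℕ)) (hdn : ∀ i, ((f i).1 : ℕ) ≤ n)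
    (hlt : ∀ i, ((f i).2 : ℕ) < r * ((f i).1 : ℕ)) (i : Fin k) : red f i ∈ slopes r n := by
  rw [mem_slopes]
  have hg := gcdi_pos f h1 i
  obtain ⟨D, hD⟩ : gcdi f i ∣ ((f i).1 : ℕ) := Nat.gcd_dvd_left _ _
  obtain ⟨V, hV⟩ : gcdi f i ∣ ((f i).2 : ℕ) := Nat.gcd_dvd_right _ _
  refine ⟨red_fst_pos f h1 i, ?_, ?_, ?_⟩
  · exact le_trans (Nat.div_le_self _ _) (hdn i)
  · have := hlt i
    rw [red]
    simp only [hD, hV]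
    rw [Nat.mul_div_cancel_left _ hg, Nat.mul_div_cancel_left _ hg]
    rw [hD, hV] at this
    have : gcdi f i * V < gcdi f i * (r * D) := by
      calc gcdi f i * V < r * (gcdi f i * D) := this
      _ = gcdi f i * (r * D) := by ring
    exact Nat.lt_of_mul_lt_mul_left this
  · rw [red]
    have := Nat.coprime_div_gcd_div_gcd (m := ((f i).2 : ℕ)) (n := ((f i).1 : ℕ))
      (by rw [Nat.gcd_comm]; exact hg)
    simp only [gcdi]
    rw [Nat.gcd_comm ((f i).1 : ℕ) ((f i).2 : ℕ)]
    exact this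

theorem red_inj (hm : StrictMono (sl f)) (h1 : ∀ i, 1 ≤ ((f i).1 : ℕ)) :
    Function.Injective (red f) := by
  intro i j hij
  have : keyQ (red f i) = keyQ (red f j) := by rw [hij]
  rw [red_keyQ f h1 i, red_keyQ f h1 j] at this
  exact hm.injective this

theorem Phi_apply (x : ℕ × ℕ) :
    Phi f x = ∑ i : Fin k, if red f i = x then ((f i).1 : ℕ) else 0 := by
  rw [Phi, Finsupp.finset_sum_apply]
  simp [Finsupp.single_apply]

theorem Phi_apply_red (hm : StrictMono (sl f)) (h1 : ∀ i, 1 ≤ ((f i).1 : ℕ)) (i : Fin k) :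
    Phi f (red f i) = ((f i).1 : ℕ) := by
  rw [Phi_apply]
  rw [Finset.sum_eq_single_of_mem i (Finset.mem_univ i)]
  · rw [if_pos rfl]
  · intro j _ hji
    rw [if_neg (fun h => hji (red_inj f hm h1 h))]

theorem Phi_apply_eq_zero (x : ℕ × ℕ) (hx : ∀ i, red f i ≠ x) : Phi f x = 0 := by
  rw [Phi_apply]
  exact Finset.sum_eq_zero fun i _ => if_neg (hx i)

end PhiSec

section PsiSec

variable (r n : ℕ) (l : (ℕ × ℕ) →₀ ℕ)

/-- the support of `l` inside the slope set. -/
noncomputable def psiT : Finset (SlopeSub r n) :=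
  (Finset.univ : Finset (SlopeSub r n)).filter (fun s => l s.val ≠ 0)

noncomputable def psiK : ℕ := (psiT r n l).card

noncomputable def psiE : Fin (psiK r n l) → SlopeSub r n :=
  fun i => (psiT r n l).orderEmbOfFin rfl i

theorem psiE_mem (i : Fin (psiK r n l)) : psiE r n l i ∈ psiT r n l :=
  Finset.orderEmbOfFin_mem _ _ _

theorem psiE_strictMono : StrictMono (psiE r n l) :=
  ((psiT r n l).orderEmbOfFin rfl).strictMono

theorem psiE_lt {i j : Fin (psiK r n l)} (hij : i < j) :
    keyQ (psiE r n l i).val < keyQ (psiE r n l j).val :=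
  SlopeSub.lt_iff.mp (psiE_strictMono r n l hij)

theorem psiE_image : Finset.image (psiE r n l) Finset.univ = psiT r n l := by
  apply Finset.coe_injective
  rw [Finset.coe_image, Finset.coe_univ, Set.image_univ]
  exact Finset.range_orderEmbOfFin _ _

/-- the inverse map: from a finitely supported function on slopes back to a tuple. -/
noncomputable def psiF : Fin (psiK r n l) → Fin (n + 1) × Fin (r * n + 1) := fun i =>
  (⟨min (l (psiE r n l i).val) n, Nat.lt_succ_of_le (min_le_right _ _)⟩,
   ⟨min ((psiE r n l i).val.2 * (l (psiE r n l i).val / (psiE r n l i).val.1)) (r * n),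
    Nat.lt_succ_of_le (min_le_right _ _)⟩)

noncomputable def Psi : Σ k : ℕ, (Fin k → Fin (n + 1) × Fin (r * n + 1)) :=
  ⟨psiK r n l, psiF r n l⟩

end PsiSec

theorem pcount_zero : pcount 0 = 1 := by
  rw [pcount]
  exact Fintype.card_unique

theorem lemmaB (r n : ℕ) : aCoeff r n = M r n := by
  classical
  rw [aCoeff, M]
  rw [← Finset.sum_sigma (Finset.range (n + 1))
    (fun k => (Finset.univ : Finset (Fin k → Fin (n + 1) × Fin (r * n + 1))))
    (fun x => if (∀ i, 1 ≤ ((x.2 i).1 : ℕ)) ∧ (∑ i, ((x.2 i).1 : ℕ)) = n ∧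
          (∀ i j : Fin x.1, (j : ℕ) = (i : ℕ) + 1 →
            ((x.2 i).2 : ℕ) * ((x.2 j).1 : ℕ) < ((x.2 j).2 : ℕ) * ((x.2 i).1 : ℕ)) ∧
          (∀ i : Fin x.1, (i : ℕ) = x.1 - 1 → ((x.2 i).2 : ℕ) < r * ((x.2 i).1 : ℕ))
      then ∏ i, pcount (Nat.gcd ((x.2 i).1 : ℕ) ((x.2 i).2 : ℕ))
      else 0)]
  rw [← Finset.sum_filter]
  rw [← Finset.sum_filter_of_ne (s := (slopes r n).finsuppAntidiag n)
    (p := fun l => ∀ x ∈ slopes r n, x.1 ∣ l x)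
    (fun l _ hne x hx => by
      by_contra hdvd
      exact hne (Finset.prod_eq_zero hx (if_neg hdvd)))]
  apply Finset.sum_nbij' (i := fun x => Phi x.2) (j := fun l => Psi r n l)
  · -- O1 : Phi lands in B
    rintro ⟨k, f⟩ ha
    obtain ⟨-, h1, hsum, h3, h4⟩ := Finset.mem_filter.mp ha
    dsimp only at h1 hsum h3 h4 ⊢
    have hm := chain_strictMono f h1 h3
    have hlt := chain_lt f h1 h3 h4
    have hdn : ∀ i, ((f i).1 : ℕ) ≤ n := by
      intro i
      have h := Finset.single_le_sum (f := fun j => ((f j).1 : ℕ))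
        (fun j _ => Nat.zero_le _) (Finset.mem_univ i)
      omega
    have hredmem := red_mem f h1 hdn hlt
    have hsubset : Finset.image (red f) Finset.univ ⊆ slopes r n := by
      intro x hx
      obtain ⟨i, _, rfl⟩ := Finset.mem_image.mp hx
      exact hredmem i
    have hzero : ∀ x ∈ slopes r n, x ∉ Finset.image (red f) Finset.univ → Phi f x = 0 := by
      intro x _ hx
      refine Phi_apply_eq_zero f x (fun i hi => hx ?_)
      exact Finset.mem_image.mpr ⟨i, Finset.mem_univ i, hi⟩
    rw [Finset.mem_filter, Finset.mem_finsuppAntidiag]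
    refine ⟨⟨?_, ?_⟩, ?_⟩
    · have e1 : ∑ x ∈ slopes r n, Phi f x = ∑ x ∈ Finset.image (red f) Finset.univ, Phi f x :=
        (Finset.sum_subset hsubset hzero).symm
      have e2 : ∑ x ∈ Finset.image (red f) Finset.univ, Phi f x = ∑ i, Phi f (red f i) :=
        Finset.sum_image (fun i _ j _ h => red_inj f hm h1 h)
      have e3 : ∑ i, Phi f (red f i) = ∑ i, ((f i).1 : ℕ) :=
        Finset.sum_congr rfl fun i _ => Phi_apply_red f hm h1 i
      exact ((e1.trans e2).trans e3).trans hsum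
    · intro x hx
      rw [Finsupp.mem_support_iff] at hx
      by_contra hxs
      have : ∀ i, red f i ≠ x := fun i hi => hxs (hi ▸ hredmem i)
      exact hx (Phi_apply_eq_zero f x this)
    · intro x hxs
      by_cases hxim : ∃ i, red f i = x
      · obtain ⟨i, rfl⟩ := hxim
        rw [Phi_apply_red f hm h1 i]
        exact Nat.div_dvd_of_dvd (Nat.gcd_dvd_left _ _)
      · push_neg at hxim
        rw [Phi_apply_eq_zero f x hxim]
        exact dvd_zero _
  · -- O2 : Psi lands in A
    intro l hl
    obtain ⟨hl1, hdvd⟩ := Finset.mem_filter.mp hl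
    obtain ⟨hsum, hsupp⟩ := Finset.mem_finsuppAntidiag.mp hl1
    have L1 : ∑ s ∈ (Finset.univ : Finset (SlopeSub r n)), l s.val = ∑ x ∈ slopes r n, l x :=
      Finset.sum_attach (slopes r n) (fun x => l x)
    have hle : ∀ s : SlopeSub r n, l s.val ≤ n := by
      intro s
      have h := Finset.single_le_sum (f := fun x => l x) (fun x _ => Nat.zero_le _) s.prop
      have hsum' : ∑ x ∈ slopes r n, l x = n := hsum
      omega
    have hT1 : ∀ s ∈ psiT r n l, 1 ≤ l s.val := by
      intro s hs
      have := (Finset.mem_filter.mp hs).2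
      omega
    have hsumT : ∑ s ∈ psiT r n l, l s.val = n := by
      rw [psiT, Finset.sum_filter_of_ne (fun s _ h => h), L1]
      exact hsum
    have hKn : psiK r n l ≤ n := by
      have h1 : psiK r n l * 1 ≤ ∑ s ∈ psiT r n l, l s.val := by
        rw [← smul_eq_mul]
        exact Finset.card_nsmul_le_sum _ _ _ hT1
      omega
    have hne : ∀ i : Fin (psiK r n l), l (psiE r n l i).val ≠ 0 :=
      fun i => (Finset.mem_filter.mp (psiE_mem r n l i)).2
    have hsl : ∀ i, (psiE r n l i).val ∈ slopes r n := fun i => (psiE r n l i).prop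
    have hb1 : ∀ i, 1 ≤ (psiE r n l i).val.1 := fun i => (mem_slopes.mp (hsl i)).1
    have har : ∀ i, (psiE r n l i).val.2 < r * (psiE r n l i).val.1 :=
      fun i => (mem_slopes.mp (hsl i)).2.2.1
    have hdvd' : ∀ i, (psiE r n l i).val.1 ∣ l (psiE r n l i).val := fun i => hdvd _ (hsl i)
    have hgpos : ∀ i, 0 < l (psiE r n l i).val / (psiE r n l i).val.1 := fun i =>
      Nat.div_pos (Nat.le_of_dvd (Nat.pos_of_ne_zero (hne i)) (hdvd' i)) (hb1 i)
    have hbg : ∀ i, (psiE r n l i).val.1 * (l (psiE r n l i).val / (psiE r n l i).val.1)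
        = l (psiE r n l i).val := fun i => Nat.mul_div_cancel' (hdvd' i)
    have hD : ∀ i, ((psiF r n l i).1 : ℕ) = l (psiE r n l i).val := by
      intro i
      exact min_eq_left (hle _)
    have hV : ∀ i, ((psiF r n l i).2 : ℕ)
        = (psiE r n l i).val.2 * (l (psiE r n l i).val / (psiE r n l i).val.1) := by
      intro i
      apply min_eq_left
      have h2 : (psiE r n l i).val.2 * (l (psiE r n l i).val / (psiE r n l i).val.1)
          < r * (psiE r n l i).val.1 * (l (psiE r n l i).val / (psiE r n l i).val.1) :=
        Nat.mul_lt_mul_of_pos_right (har i) (hgpos i)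
      have h3 : r * (psiE r n l i).val.1 * (l (psiE r n l i).val / (psiE r n l i).val.1)
          = r * l (psiE r n l i).val := by
        rw [mul_assoc, hbg i]
      have h4 : r * l (psiE r n l i).val ≤ r * n := Nat.mul_le_mul_left r (hle _)
      omega
    rw [Psi, Finset.mem_filter, Finset.mem_sigma]
    dsimp only
    refine ⟨⟨Finset.mem_range.mpr (Nat.lt_succ_of_le hKn), Finset.mem_univ _⟩, ?_, ?_, ?_, ?_⟩
    · intro i
      rw [hD]
      exact Nat.one_le_iff_ne_zero.mpr (hne i)
    · have e0 : ∑ i, ((psiF r n l i).1 : ℕ) = ∑ i, l (psiE r n l i).val :=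
        Finset.sum_congr rfl fun i _ => hD i
      have e1 : ∑ s ∈ Finset.image (psiE r n l) Finset.univ, l s.val
          = ∑ i, l (psiE r n l i).val :=
        Finset.sum_image (fun i _ j _ h => (psiE_strictMono r n l).injective h)
      rw [e0, ← e1, psiE_image]
      exact hsumT
    · intro i j hij
      have hij' : i < j := by
        rw [Fin.lt_def]
        omega
      have hkey := psiE_lt r n l hij'
      have hcross : (psiE r n l i).val.2 * (psiE r n l j).val.1
          < (psiE r n l j).val.2 * (psiE r n l i).val.1 :=
        (keyQ_lt_iff (hb1 i) (hb1 j)).mp hkey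
      rw [hD, hD, hV, hV]
      have hpos : 0 < (l (psiE r n l i).val / (psiE r n l i).val.1)
          * (l (psiE r n l j).val / (psiE r n l j).val.1) :=
        Nat.mul_pos (hgpos i) (hgpos j)
      calc (psiE r n l i).val.2 * (l (psiE r n l i).val / (psiE r n l i).val.1)
            * l (psiE r n l j).val
          = (psiE r n l i).val.2 * (l (psiE r n l i).val / (psiE r n l i).val.1)
            * ((psiE r n l j).val.1 * (l (psiE r n l j).val / (psiE r n l j).val.1)) := by
            rw [hbg j]
        _ = ((psiE r n l i).val.2 * (psiE r n l j).val.1)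
            * ((l (psiE r n l i).val / (psiE r n l i).val.1)
              * (l (psiE r n l j).val / (psiE r n l j).val.1)) := by ring
        _ < ((psiE r n l j).val.2 * (psiE r n l i).val.1)
            * ((l (psiE r n l i).val / (psiE r n l i).val.1)
              * (l (psiE r n l j).val / (psiE r n l j).val.1)) :=
            Nat.mul_lt_mul_of_pos_right hcross hpos
        _ = (psiE r n l j).val.2 * (l (psiE r n l j).val / (psiE r n l j).val.1)
            * ((psiE r n l i).val.1 * (l (psiE r n l i).val / (psiE r n l i).val.1)) := by ring
        _ = (psiE r n l j).val.2 * (l (psiE r n l j).val / (psiE r n l j).val.1)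
            * l (psiE r n l i).val := by rw [hbg i]
    · intro i _
      rw [hD, hV]
      have h2 : (psiE r n l i).val.2 * (l (psiE r n l i).val / (psiE r n l i).val.1)
          < r * (psiE r n l i).val.1 * (l (psiE r n l i).val / (psiE r n l i).val.1) :=
        Nat.mul_lt_mul_of_pos_right (har i) (hgpos i)
      rw [mul_assoc, hbg i] at h2
      exact h2
  · -- O3 : left inverse
    rintro ⟨k, f⟩ ha
    obtain ⟨-, h1, hsum, h3, h4⟩ := Finset.mem_filter.mp ha
    dsimp only at h1 hsum h3 h4 ⊢
    have hm := chain_strictMono f h1 h3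
    have hlt := chain_lt f h1 h3 h4
    have hdn : ∀ i, ((f i).1 : ℕ) ≤ n := by
      intro i
      have h := Finset.single_le_sum (f := fun j => ((f j).1 : ℕ))
        (fun j _ => Nat.zero_le _) (Finset.mem_univ i)
      omega
    have hredmem := red_mem f h1 hdn hlt
    set l := Phi f with hldef
    set red' : Fin k → SlopeSub r n := fun i => ⟨red f i, hredmem i⟩ with hred'
    have hred'inj : Function.Injective red' := fun i j h =>
      red_inj f hm h1 (congrArg SlopeSub.val h)
    have hlred : ∀ i, l (red f i) = ((f i).1 : ℕ) := Phi_apply_red f hm h1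
    have hT : psiT r n l = Finset.image red' Finset.univ := by
      ext s
      rw [psiT, Finset.mem_filter]
      constructor
      · rintro ⟨-, hs⟩
        by_contra hsim
        have hnone : ∀ i, red f i ≠ s.val := by
          intro i hi
          exact hsim (Finset.mem_image.mpr ⟨i, Finset.mem_univ i, Subtype.ext hi⟩)
        exact hs (Phi_apply_eq_zero f s.val hnone)
      · intro hs
        obtain ⟨i, -, rfl⟩ := Finset.mem_image.mp hs
        refine ⟨Finset.mem_univ _, ?_⟩
        show l (red f i) ≠ 0
        rw [hlred i]
        have := h1 i
        omega
    have hK : psiK r n l = k := by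
      rw [psiK, hT, Finset.card_image_of_injective _ hred'inj, Finset.card_univ,
        Fintype.card_fin]
    have hmono' : StrictMono (fun i : Fin (psiK r n l) => red' (Fin.cast hK i)) := by
      intro i j hij
      have hij2 : Fin.cast hK i < Fin.cast hK j := by
        rw [Fin.lt_def] at hij ⊢
        exact hij
      have hlt2 : sl f (Fin.cast hK i) < sl f (Fin.cast hK j) := hm hij2
      have hkey : keyQ (red f (Fin.cast hK i)) < keyQ (red f (Fin.cast hK j)) := by
        rw [red_keyQ f h1, red_keyQ f h1]
        exact hlt2
      exact SlopeSub.lt_iff.mpr hkey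
    have hmem' : ∀ i : Fin (psiK r n l), red' (Fin.cast hK i) ∈ psiT r n l := by
      intro i
      rw [hT]
      exact Finset.mem_image_of_mem _ (Finset.mem_univ _)
    have hEq := Finset.orderEmbOfFin_unique (s := psiT r n l) (k := psiK r n l) rfl hmem' hmono'
    have hE : ∀ i : Fin (psiK r n l), psiE r n l i = red' (Fin.cast hK i) := by
      intro i
      show (psiT r n l).orderEmbOfFin rfl i = red' (Fin.cast hK i)
      exact (congrFun hEq i).symm
    refine Sigma.ext hK ?_
    show HEq (psiF r n l) f
    refine (Fin.heq_fun_iff hK).mpr ?_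
    intro i
    have hval : (psiE r n l i).val = red f (Fin.cast hK i) := by rw [hE i]; rfl
    have hcast : (⟨(i : ℕ), hK ▸ i.2⟩ : Fin k) = Fin.cast hK i := rfl
    rw [hcast]
    set j := Fin.cast hK i with hj
    apply Prod.ext <;> apply Fin.ext
    · show min (l (psiE r n l i).val) n = ((f j).1 : ℕ)
      rw [hval, hlred j]
      exact min_eq_left (hdn j)
    · show min ((psiE r n l i).val.2 * (l (psiE r n l i).val / (psiE r n l i).val.1)) (r * n)
        = ((f j).2 : ℕ)
      rw [hval, hlred j]
      rw [show (red f j).1 = ((f j).1 : ℕ) / gcdi f j from rfl,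
        show (red f j).2 = ((f j).2 : ℕ) / gcdi f j from rfl]
      rw [show ((f j).1 : ℕ) / (((f j).1 : ℕ) / gcdi f j) = gcdi f j from red_div f h1 j]
      rw [Nat.div_mul_cancel
        (show gcdi f j ∣ ((f j).2 : ℕ) from Nat.gcd_dvd_right _ _)]
      exact min_eq_left (Fin.is_le _)
  · -- O4 : right inverse
    intro l hl
    obtain ⟨hl1, hdvd⟩ := Finset.mem_filter.mp hl
    obtain ⟨hsum, hsupp⟩ := Finset.mem_finsuppAntidiag.mp hl1
    have L1 : ∑ s ∈ (Finset.univ : Finset (SlopeSub r n)), l s.val = ∑ x ∈ slopes r n, l x :=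
      Finset.sum_attach (slopes r n) (fun x => l x)
    have hle : ∀ s : SlopeSub r n, l s.val ≤ n := by
      intro s
      have h := Finset.single_le_sum (f := fun x => l x) (fun x _ => Nat.zero_le _) s.prop
      have hsum' : ∑ x ∈ slopes r n, l x = n := hsum
      omega
    have hne : ∀ i : Fin (psiK r n l), l (psiE r n l i).val ≠ 0 :=
      fun i => (Finset.mem_filter.mp (psiE_mem r n l i)).2
    have hsl : ∀ i, (psiE r n l i).val ∈ slopes r n := fun i => (psiE r n l i).prop
    have hb1 : ∀ i, 1 ≤ (psiE r n l i).val.1 := fun i => (mem_slopes.mp (hsl i)).1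
    have har : ∀ i, (psiE r n l i).val.2 < r * (psiE r n l i).val.1 :=
      fun i => (mem_slopes.mp (hsl i)).2.2.1
    have hco : ∀ i, Nat.Coprime (psiE r n l i).val.2 (psiE r n l i).val.1 :=
      fun i => (mem_slopes.mp (hsl i)).2.2.2
    have hdvd' : ∀ i, (psiE r n l i).val.1 ∣ l (psiE r n l i).val := fun i => hdvd _ (hsl i)
    have hgpos : ∀ i, 0 < l (psiE r n l i).val / (psiE r n l i).val.1 := fun i =>
      Nat.div_pos (Nat.le_of_dvd (Nat.pos_of_ne_zero (hne i)) (hdvd' i)) (hb1 i)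
    have hbg : ∀ i, (psiE r n l i).val.1 * (l (psiE r n l i).val / (psiE r n l i).val.1)
        = l (psiE r n l i).val := fun i => Nat.mul_div_cancel' (hdvd' i)
    have hD : ∀ i, ((psiF r n l i).1 : ℕ) = l (psiE r n l i).val := by
      intro i
      exact min_eq_left (hle _)
    have hV : ∀ i, ((psiF r n l i).2 : ℕ)
        = (psiE r n l i).val.2 * (l (psiE r n l i).val / (psiE r n l i).val.1) := by
      intro i
      apply min_eq_left
      have h2 : (psiE r n l i).val.2 * (l (psiE r n l i).val / (psiE r n l i).val.1)
          < r * (psiE r n l i).val.1 * (l (psiE r n l i).val / (psiE r n l i).val.1) :=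
        Nat.mul_lt_mul_of_pos_right (har i) (hgpos i)
      have h3 : r * (psiE r n l i).val.1 * (l (psiE r n l i).val / (psiE r n l i).val.1)
          = r * l (psiE r n l i).val := by
        rw [mul_assoc, hbg i]
      have h4 : r * l (psiE r n l i).val ≤ r * n := Nat.mul_le_mul_left r (hle _)
      omega
    have hred : ∀ i, red (psiF r n l) i = (psiE r n l i).val := by
      intro i
      set G := l (psiE r n l i).val / (psiE r n l i).val.1 with hG
      have hGpos : 0 < G := hgpos i
      have hlG : l (psiE r n l i).val = (psiE r n l i).val.1 * G := (hbg i).symm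
      have hgcd : gcdi (psiF r n l) i = G := by
        rw [gcdi, hD, hV, ← hG, hlG, Nat.gcd_mul_right,
          Nat.gcd_comm, hco i, one_mul]
      rw [red, hgcd, hD, hV, ← hG, hlG,
        Nat.mul_div_cancel _ hGpos, Nat.mul_div_cancel _ hGpos]
    show Phi (psiF r n l) = l
    apply Finsupp.ext
    intro x
    rw [Phi_apply]
    by_cases hx : ∃ i, (psiE r n l i).val = x
    · obtain ⟨i0, rfl⟩ := hx
      rw [Finset.sum_eq_single_of_mem i0 (Finset.mem_univ i0)]
      · rw [if_pos (hred i0), hD]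
      · intro j _ hji
        rw [if_neg]
        rw [hred j]
        intro hcontra
        exact hji ((psiE_strictMono r n l).injective (SlopeSub.val_injective hcontra))
    · push_neg at hx
      have hz : ∀ i ∈ (Finset.univ : Finset (Fin (psiK r n l))),
          (if red (psiF r n l) i = x then ((psiF r n l i).1 : ℕ) else 0) = 0 := by
        intro i _
        rw [if_neg]
        rw [hred i]
        exact hx i
      rw [Finset.sum_eq_zero hz]
      by_cases hxs : x ∈ slopes r n
      · by_contra hlx
        have hmem : (⟨x, hxs⟩ : SlopeSub r n) ∈ psiT r n l :=
          Finset.mem_filter.mpr ⟨Finset.mem_univ _, fun h => hlx h.symm⟩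
        rw [← psiE_image] at hmem
        obtain ⟨i, -, hi⟩ := Finset.mem_image.mp hmem
        exact hx i (congrArg SlopeSub.val hi)
      · symm
        exact Finsupp.notMem_support_iff.mp (fun hmem => hxs (hsupp hmem))
  · -- O5 : weights agree
    rintro ⟨k, f⟩ ha
    obtain ⟨-, h1, hsum, h3, h4⟩ := Finset.mem_filter.mp ha
    dsimp only at h1 hsum h3 h4 ⊢
    have hm := chain_strictMono f h1 h3
    have hlt := chain_lt f h1 h3 h4
    have hdn : ∀ i, ((f i).1 : ℕ) ≤ n := by
      intro i
      have h := Finset.single_le_sum (f := fun j => ((f j).1 : ℕ))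
        (fun j _ => Nat.zero_le _) (Finset.mem_univ i)
      omega
    have hredmem := red_mem f h1 hdn hlt
    have hsubset : Finset.image (red f) Finset.univ ⊆ slopes r n := by
      intro x hx
      obtain ⟨i, _, rfl⟩ := Finset.mem_image.mp hx
      exact hredmem i
    have hzero : ∀ x ∈ slopes r n, x ∉ Finset.image (red f) Finset.univ →
        (if x.1 ∣ Phi f x then pcount (Phi f x / x.1) else 0) = 1 := by
      intro x _ hx
      have h0 : Phi f x = 0 := by
        refine Phi_apply_eq_zero f x (fun i hi => hx ?_)
        exact Finset.mem_image.mpr ⟨i, Finset.mem_univ i, hi⟩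
      rw [h0, if_pos (dvd_zero _), Nat.zero_div, pcount_zero]
    have e1 : ∏ x ∈ slopes r n, (if x.1 ∣ Phi f x then pcount (Phi f x / x.1) else 0)
        = ∏ x ∈ Finset.image (red f) Finset.univ,
            (if x.1 ∣ Phi f x then pcount (Phi f x / x.1) else 0) :=
      (Finset.prod_subset hsubset hzero).symm
    have e2 : ∏ x ∈ Finset.image (red f) Finset.univ,
          (if x.1 ∣ Phi f x then pcount (Phi f x / x.1) else 0)
        = ∏ i, (if (red f i).1 ∣ Phi f (red f i) then pcount (Phi f (red f i) / (red f i).1)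
            else 0) :=
      Finset.prod_image (fun i _ j _ h => red_inj f hm h1 h)
    rw [e1, e2]
    refine Finset.prod_congr rfl fun i _ => ?_
    rw [Phi_apply_red f hm h1 i,
      if_pos (show (red f i).1 ∣ ((f i).1 : ℕ) from Nat.div_dvd_of_dvd (Nat.gcd_dvd_left _ _)),
      red_div f h1 i]
    rfl

end
end SlopeAux

/-- for `r ≥ 1` and `n ≥ 0`, the number `a_n` equals the coefficient of
`qⁿ` in `∏_{b=1}^{n} ( ∏_{k=1}^{n} (1−q^{bk})^{−1} )^{r·φ(b)}`, where `φ` is Euler's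
totient function; equivalently `∑ a_n qⁿ` is the product over all pairs `(a,b)` with
`b ≥ 1`, `0 ≤ a < rb`, `gcd(a,b) = 1` of `∏_{k≥1} (1−q^{bk})^{−1}`. -/
theorem aCoeff_eq_slope_product_coeff (r n : ℕ) (hr : 1 ≤ r) :
    (PowerSeries.coeff (R := ℚ) n)
        (∏ b ∈ Finset.Icc 1 n,
          (∏ k ∈ Finset.Icc 1 n,
            ((1 - (PowerSeries.X : PowerSeries ℚ) ^ (b * k))⁻¹)) ^ (r * Nat.totient b))
      = aCoeff r n := by
  rw [SlopeAux.lemmaA r n, SlopeAux.lemmaB r n]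
end
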